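/- Let G be a graph, v a vertex of degree t ≥ 2, and G_v the Meredith extension of G at v (replace v by a copy of K_{t,t−1} attached by t pendant edges matching the former edges at v). Then G has t pairwise disjoint perfect matchings if and only if G_v has t pairwise disjoint perfect matchings. -/

import Mathlib

/-- `m` is a perfect matching of the multigraph with edge multiset `E`. -/
def IsPMOf {V : Type} [DecidableEq V] (E m : Multiset (Sym2 V)) : Prop :=
  m ≤ E ∧ ∀ v : V, (m.filter (fun e => v ∈ e)).card = 1

/-- The multigraph with edge multiset `E` is `t`-edge-connected: every
nonempty proper vertex subset has edge boundary of size at least `t`. -/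
def EdgeConnGE {V : Type} [Fintype V] [DecidableEq V]
    (E : Multiset (Sym2 V)) (t : ℕ) : Prop :=
  ∀ X : Finset V, X.Nonempty → X ≠ Finset.univ →
    t ≤ (E.filter (fun e => ∃ a ∈ X, ∃ b, b ∉ X ∧ e = s(a, b))).card

/-- The vertex type of the Meredith extension at `v`: the old vertices other
than `v`, together with the two sides `u₁,…,u_t` and `w₁,…,w_{t−1}` of a copy
of `K_{t,t−1}`. -/
abbrev MeredithV (V : Type) (v : V) (t : ℕ) : Type :=
  {x : V // x ≠ v} ⊕ (Fin t ⊕ Fin (t - 1))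

/-- The edge multiset of the Meredith extension `G_v`: delete `v`, keep all
edges not incident with `v`, add a complete bipartite `K_{t,t−1}` between the
`uᵢ` and the `wⱼ`, and join `uᵢ` to `f i` (the `i`-th former neighbor of `v`). -/
def meredithEdges {V : Type} [Fintype V] [DecidableEq V]
    (E : Multiset (Sym2 V)) (v : V) (t : ℕ) (ht : 0 < t) (f : Fin t → V) :
    Multiset (Sym2 (MeredithV V v t)) :=
  (E.filter (fun e => v ∉ e)).map (Sym2.map (fun x =>
    if h : x = v then Sum.inr (Sum.inl ⟨0, ht⟩) else Sum.inl ⟨x, h⟩)) +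
  ((Finset.univ : Finset (Fin t × Fin (t - 1))).val.map
    (fun p => s(Sum.inr (Sum.inl p.1), Sum.inr (Sum.inr p.2)))) +
  ((Finset.univ : Finset (Fin t)).val.map (fun i =>
    s((if h : f i = v then Sum.inr (Sum.inl ⟨0, ht⟩) else Sum.inl ⟨f i, h⟩),
      Sum.inr (Sum.inl i))))

/-!
Contracting the gadget `K_{t,t−1}` back to `v` turns a perfect matching of `G_v` into one of `G`:
the `t − 1` vertices `wₘ` are matched inside the gadget, so exactly one `uₖ` is matched by its
pendant edge, and that edge becomes the matching edge at `v`. Contraction is additive and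
monotone, so disjointness is preserved.

Conversely, `t` disjoint perfect matchings of `G` use the `t` edges at `v` once each, the `i`-th
using `s(v, f (τ i))`. It lifts through the pendant edge at `u_{τ i}` and the gadget matching
`wₘ ↦ u_{τ i + m + 1}` (indices mod `t`); these `t` gadget matchings partition `K_{t,t−1}`.
-/

namespace Multiset

variable {α : Type*}

lemma exists_eq_add_of_le_add [DecidableEq α] {m s t : Multiset α} (h : m ≤ s + t) :
    ∃ a b, a ≤ s ∧ b ≤ t ∧ m = a + b := by
  refine ⟨m ∩ s, m - m ∩ s, inter_le_right, ?_, (add_tsub_cancel_of_le inter_le_left).symm⟩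
  rw [le_iff_count] at h ⊢
  intro x
  have := h x
  simp only [count_sub, count_inter, count_add] at this ⊢
  omega

lemma filter_sum {ι : Type*} (p : α → Prop) [DecidablePred p] (s : Finset ι)
    (m : ι → Multiset α) : (∑ i ∈ s, m i).filter p = ∑ i ∈ s, (m i).filter p :=
  map_sum (⟨⟨filter p, filter_zero p⟩, filter_add p⟩ : Multiset α →+ Multiset α) m s

end Multiset

lemma Finset.sum_singleton_eq_map_univ_val {ι α : Type*} [Fintype ι] (g : ι → α) :
    ∑ i, ({g i} : Multiset α) = Finset.univ.val.map g := by
  rw [← Multiset.sum_map_singleton (Finset.univ.val.map g), Multiset.map_map,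
    Finset.sum_map_val]
  rfl

lemma Finset.sum_boole_eq_one_of_existsUnique {ι : Type*} [Fintype ι] {p : ι → Prop}
    [DecidablePred p] (h : ∃! i, p i) : ∑ i, (if p i then 1 else 0 : ℕ) = 1 := by
  obtain ⟨i, hi, huniq⟩ := h
  rw [Finset.sum_eq_single i (fun j _ hj => if_neg fun hpj => hj (huniq j hpj))
    (by simp), if_pos hi]

lemma exists_equiv_of_map_univ_eq {α β γ : Type*} [Fintype α] [Fintype β] [DecidableEq γ]
    {f : α → γ} {g : β → γ} (h : Finset.univ.val.map f = Finset.univ.val.map g) :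
    ∃ e : α ≃ β, ∀ a, g (e a) = f a := by
  classical
  have hfiber : ∀ c, Fintype.card {a // f a = c} = Fintype.card {b // g b = c} := by
    intro c
    have := congrArg (Multiset.count c) h
    simp only [Multiset.count_map, ← Finset.filter_val, Finset.card_val] at this
    simpa only [Fintype.card_subtype, @eq_comm _ c] using this
  exact ⟨Equiv.ofFiberEquiv fun c => Fintype.equivOfCardEq (hfiber c),
    Equiv.ofFiberEquiv_map _⟩

section EdgeDegree

variable {X : Type} [DecidableEq X]

def edgeDegree (m : Multiset (Sym2 X)) (x : X) : ℕ :=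
  m.countP (x ∈ ·)

lemma isPMOf_iff {E m : Multiset (Sym2 X)} :
    IsPMOf E m ↔ m ≤ E ∧ ∀ x, edgeDegree m x = 1 := by
  simp only [IsPMOf, edgeDegree, Multiset.countP_eq_card_filter]

@[simp] lemma edgeDegree_zero (x : X) : edgeDegree 0 x = 0 :=
  Multiset.countP_zero _

@[simp] lemma edgeDegree_add (m m' : Multiset (Sym2 X)) (x : X) :
    edgeDegree (m + m') x = edgeDegree m x + edgeDegree m' x :=
  Multiset.countP_add _ _ _

@[simp] lemma edgeDegree_singleton (e : Sym2 X) (x : X) :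
    edgeDegree {e} x = if x ∈ e then 1 else 0 := by
  rw [edgeDegree, ← Multiset.cons_zero, Multiset.countP_cons, Multiset.countP_zero, zero_add]

lemma edgeDegree_sum {ι : Type*} (s : Finset ι) (m : ι → Multiset (Sym2 X)) (x : X) :
    edgeDegree (∑ i ∈ s, m i) x = ∑ i ∈ s, edgeDegree (m i) x :=
  map_sum (Multiset.countPAddMonoidHom (x ∈ ·)) m s

lemma edgeDegree_eq_zero {m : Multiset (Sym2 X)} {x : X} :
    edgeDegree m x = 0 ↔ ∀ e ∈ m, x ∉ e :=
  Multiset.countP_eq_zero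

lemma sum_edgeDegree_eq_card {ι : Type*} [Fintype ι] (g : ι → X) {m : Multiset (Sym2 X)}
    (h : ∀ e ∈ m, ∃! k, g k ∈ e) : ∑ k, edgeDegree m (g k) = Multiset.card m := by
  induction m using Multiset.induction_on with
  | empty => simp [edgeDegree]
  | cons e m ih =>
    simp only [Multiset.mem_cons, forall_eq_or_imp] at h
    simp only [edgeDegree, Multiset.countP_cons, Finset.sum_add_distrib] at ih ⊢
    rw [ih h.2, Finset.sum_boole_eq_one_of_existsUnique h.1, Multiset.card_cons]

end EdgeDegree

namespace Meredith

variable {V : Type} {v : V} {t : ℕ}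

abbrev u (k : Fin t) : MeredithV V v t := .inr (.inl k)

abbrev w (m : Fin (t - 1)) : MeredithV V v t := .inr (.inr m)

def contract : MeredithV V v t → V
  | .inl x => x
  | .inr _ => v

lemma contract_eq_iff {x : V} (hx : x ≠ v) {y : MeredithV V v t} :
    contract y = x ↔ y = .inl ⟨x, hx⟩ := by
  rcases y with y | y
  · simp [contract, Subtype.ext_iff]
  · simp [contract, Ne.symm hx]

def bipEdge (v : V) (p : Fin t × Fin (t - 1)) : Sym2 (MeredithV V v t) :=
  s(u p.1, w p.2)

def wShift (m : Fin (t - 1)) : Fin t :=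
  ⟨m + 1, by have := m.isLt; omega⟩

lemma wShift_injective : Function.Injective (wShift (t := t)) :=
  fun a b h => Fin.ext (by simpa [wShift] using congrArg Fin.val h)

lemma add_wShift_ne_self [NeZero t] (j : Fin t) (m : Fin (t - 1)) : j + wShift m ≠ j := by
  rw [Ne, add_eq_left, Fin.ext_iff, Fin.val_zero]
  exact Nat.succ_ne_zero _

lemma existsUnique_add_wShift_eq [NeZero t] {j k : Fin t} (h : k ≠ j) :
    ∃! m : Fin (t - 1), j + wShift m = k := by
  have hc : (k - j).val ≠ 0 := fun h0 => h (sub_eq_zero.mp (Fin.ext (by rw [h0, Fin.val_zero])))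
  refine ⟨⟨(k - j).val - 1, by have := (k - j).isLt; omega⟩, ?_, fun m hm => ?_⟩
  · show j + wShift _ = k
    rw [← eq_sub_iff_add_eq']
    exact Fin.ext (by simp only [wShift]; omega)
  · replace hm : wShift m = k - j := eq_sub_iff_add_eq'.mpr hm
    exact wShift_injective (hm.trans (Fin.ext (by simp only [wShift]; omega)))

/-- The `j`-th of the `t` perfect matchings of `K_{t,t−1} − uⱼ` that partition the edges of
`K_{t,t−1}`: it joins `wₘ` to `u_{j+m+1}`, indices mod `t`. -/
def gadgetMatching (v : V) (j : Fin t) : Multiset (Sym2 (MeredithV V v t)) :=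
  ∑ m, {bipEdge v (j + wShift m, m)}

lemma sum_gadgetMatching [NeZero t] :
    ∑ j, gadgetMatching v j = Finset.univ.val.map (bipEdge (t := t) v) := by
  rw [← Finset.sum_singleton_eq_map_univ_val, Fintype.sum_prod_type, Finset.sum_comm]
  simp only [gadgetMatching]
  rw [Finset.sum_comm]
  exact Finset.sum_congr rfl fun m _ =>
    Equiv.sum_comp (Equiv.addRight (wShift m)) fun k => {bipEdge v (k, m)}

lemma gadgetMatching_le [NeZero t] (j : Fin t) :
    gadgetMatching v j ≤ Finset.univ.val.map (bipEdge v) :=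
  sum_gadgetMatching (v := v) (t := t) ▸
    Finset.single_le_sum (fun _ _ => Multiset.zero_le _) (Finset.mem_univ j)

variable [DecidableEq V]

/-- As in `meredithEdges`, `v` itself goes to `u₀`; only edges avoiding `v` are ever embedded. -/
def embed (v : V) (ht : 0 < t) (x : V) : MeredithV V v t :=
  if h : x = v then u ⟨0, ht⟩ else .inl ⟨x, h⟩

def pendantEdge (v : V) (ht : 0 < t) (f : Fin t → V) (k : Fin t) : Sym2 (MeredithV V v t) :=
  s(embed v ht (f k), u k)

lemma meredithEdges_eq [Fintype V] (E : Multiset (Sym2 V)) (ht : 0 < t) (f : Fin t → V) :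
    meredithEdges E v t ht f =
      (E.filter (v ∉ ·)).map (Sym2.map (embed v ht)) + Finset.univ.val.map (bipEdge v) +
        Finset.univ.val.map (pendantEdge v ht f) :=
  rfl

lemma contract_embed (ht : 0 < t) (x : V) : contract (embed v ht x) = x := by
  unfold embed
  split_ifs with h
  · exact h.symm
  · rfl

lemma embed_of_ne (ht : 0 < t) {x : V} (hx : x ≠ v) : embed v ht x = .inl ⟨x, hx⟩ :=
  dif_neg hx

lemma inr_notMem_map_embed (ht : 0 < t) {e : Sym2 V} (he : v ∉ e) (g : Fin t ⊕ Fin (t - 1)) :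
    (.inr g : MeredithV V v t) ∉ e.map (embed v ht) := by
  rw [Sym2.mem_map]
  rintro ⟨x, hx, hxg⟩
  rw [embed_of_ne ht (by rintro rfl; exact he hx)] at hxg
  exact Sum.inl_ne_inr hxg

lemma map_contract_pendantEdge (ht : 0 < t) {f : Fin t → V} (k : Fin t) :
    (pendantEdge v ht f k).map contract = s(v, f k) := by
  rw [pendantEdge, Sym2.map_mk, contract_embed, Sym2.eq_swap]
  rfl

/-- The edges of `K_{t,t−1}` contract to loops at `v`, which are dropped. -/
def contractEdges (m : Multiset (Sym2 (MeredithV V v t))) : Multiset (Sym2 V) :=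
  (m.map (Sym2.map contract)).filter (· ≠ s(v, v))

lemma contractEdges_add (m m' : Multiset (Sym2 (MeredithV V v t))) :
    contractEdges (m + m') = contractEdges m + contractEdges m' := by
  rw [contractEdges, Multiset.map_add, Multiset.filter_add]
  rfl

lemma contractEdges_sum {ι : Type*} (s : Finset ι) (m : ι → Multiset (Sym2 (MeredithV V v t))) :
    contractEdges (∑ i ∈ s, m i) = ∑ i ∈ s, contractEdges (m i) := by
  rw [contractEdges, ← Multiset.coe_mapAddMonoidHom, map_sum, Multiset.filter_sum]
  rfl

lemma contractEdges_mono : Monotone (contractEdges (v := v) (t := t)) :=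
  fun _ _ h => Multiset.filter_le_filter _ (Multiset.map_le_map h)

lemma contractEdges_map_embed (ht : 0 < t) {S : Multiset (Sym2 V)} (hS : ∀ e ∈ S, v ∉ e) :
    contractEdges (S.map (Sym2.map (embed v ht))) = S := by
  have hid : ∀ e : Sym2 V, (e.map (embed v ht)).map contract = e := fun e => by
    rw [Sym2.map_map]
    simp [contract_embed]
  simp only [contractEdges, Multiset.map_map, Function.comp_def, hid, Multiset.map_id']
  exact Multiset.filter_eq_self.mpr fun e he h => hS e he (h ▸ Sym2.mem_mk_left v v)

lemma contractEdges_eq_zero_of_le_bipEdges {b : Multiset (Sym2 (MeredithV V v t))}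
    (hb : b ≤ Finset.univ.val.map (bipEdge v)) : contractEdges b = 0 := by
  have hbip : contractEdges (t := t) (Finset.univ.val.map (bipEdge v)) = 0 := by
    simp only [contractEdges, Multiset.filter_eq_nil, Multiset.forall_mem_map_iff]
    simp [bipEdge, contract]
  exact le_antisymm (hbip ▸ contractEdges_mono hb) (Multiset.zero_le _)

lemma contractEdges_map_pendantEdge (ht : 0 < t) {f : Fin t → V} (hf : ∀ k, f k ≠ v)
    (s : Multiset (Fin t)) :
    contractEdges (s.map (pendantEdge v ht f)) = s.map fun k => s(v, f k) := by
  simp only [contractEdges, Multiset.map_map, Function.comp_def, map_contract_pendantEdge]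
  refine Multiset.filter_eq_self.mpr fun e he => ?_
  obtain ⟨k, -, rfl⟩ := Multiset.mem_map.mp he
  simpa [Sym2.congr_right] using (hf k)

lemma contractEdges_meredithEdges [Fintype V] {E : Multiset (Sym2 V)} (ht : 0 < t)
    {f : Fin t → V} (hf : ∀ k, f k ≠ v)
    (hdeg : E.filter (v ∈ ·) = Finset.univ.val.map fun k => s(v, f k)) :
    contractEdges (meredithEdges E v t ht f) = E := by
  rw [meredithEdges_eq, contractEdges_add, contractEdges_add,
    contractEdges_map_embed ht fun e he => (Multiset.mem_filter.mp he).2,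
    contractEdges_eq_zero_of_le_bipEdges le_rfl, contractEdges_map_pendantEdge ht hf, ← hdeg,
    add_zero, add_comm]
  exact Multiset.filter_add_not _ E

lemma edgeDegree_contractEdges_of_ne {x : V} (hx : x ≠ v)
    (m : Multiset (Sym2 (MeredithV V v t))) :
    edgeDegree (contractEdges m) x = edgeDegree m (.inl ⟨x, hx⟩) := by
  have hloop : ∀ e : Sym2 V, x ∈ e → e ≠ s(v, v) := fun e hxe h => by
    rw [h, Sym2.mem_iff, or_self] at hxe
    exact hx hxe
  rw [edgeDegree, contractEdges, Multiset.countP_filter,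
    Multiset.countP_congr rfl fun e _ => propext (and_iff_left_of_imp (hloop e)),
    Multiset.countP_map, edgeDegree, Multiset.countP_eq_card_filter]
  simp only [Sym2.mem_map, contract_eq_iff hx, exists_eq_right]

lemma edgeDegree_contractEdges_of_le_pendantEdges (ht : 0 < t) {f : Fin t → V}
    (hf : ∀ k, f k ≠ v) {p : Multiset (Sym2 (MeredithV V v t))}
    (hp : p ≤ Finset.univ.val.map (pendantEdge v ht f)) :
    edgeDegree (contractEdges p) v = Multiset.card p := by
  rw [edgeDegree, contractEdges, Multiset.countP_filter, Multiset.countP_map,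
    Multiset.filter_eq_self.mpr]
  intro e he
  obtain ⟨k, -, rfl⟩ := Multiset.mem_map.mp (Multiset.mem_of_le hp he)
  rw [map_contract_pendantEdge]
  exact ⟨Sym2.mem_mk_left _ _, by simpa [Sym2.congr_right] using hf k⟩

/-- Every `wₘ` is matched inside `K_{t,t−1}` and every `uₖ` inside `K_{t,t−1}` or by a pendant
edge, so the pendant edges used number `t − (t − 1) = 1`. -/
lemma card_eq_one_of_le_pendantEdges {E : Multiset (Sym2 V)} (ht : 0 < t)
    {f : Fin t → V} (hf : ∀ k, f k ≠ v) {a b p : Multiset (Sym2 (MeredithV V v t))}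
    (ha : a ≤ (E.filter (v ∉ ·)).map (Sym2.map (embed v ht)))
    (hb : b ≤ Finset.univ.val.map (bipEdge v))
    (hp : p ≤ Finset.univ.val.map (pendantEdge v ht f))
    (hdeg : ∀ g, edgeDegree (a + b + p) (.inr g) = 1) :
    Multiset.card p = 1 := by
  have ha0 : ∀ g, edgeDegree a (.inr g) = 0 := fun g => edgeDegree_eq_zero.mpr fun e he => by
    obtain ⟨e', he', rfl⟩ := Multiset.mem_map.mp (Multiset.mem_of_le ha he)
    exact inr_notMem_map_embed ht (Multiset.mem_filter.mp he').2 g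
  have hp_mem : ∀ e ∈ p, ∃ k, e = s(.inl ⟨f k, hf k⟩, u k) := fun e he => by
    obtain ⟨k, -, rfl⟩ := Multiset.mem_map.mp (Multiset.mem_of_le hp he)
    exact ⟨k, by rw [pendantEdge, embed_of_ne ht (hf k)]⟩
  have hb_mem : ∀ e ∈ b, ∃ q : Fin t × Fin (t - 1), e = s(u q.1, w q.2) := fun e he => by
    obtain ⟨q, -, rfl⟩ := Multiset.mem_map.mp (Multiset.mem_of_le hb he)
    exact ⟨q, rfl⟩
  have hpw : ∀ m, edgeDegree p (w m) = 0 := fun m => edgeDegree_eq_zero.mpr fun e he => by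
    obtain ⟨k, rfl⟩ := hp_mem e he
    simp
  have hpu : ∑ k, edgeDegree p (u k) = Multiset.card p :=
    sum_edgeDegree_eq_card _ fun e he => by
      obtain ⟨k, rfl⟩ := hp_mem e he
      exact ⟨k, by simp, fun k' => by simp⟩
  have hbu : ∑ k, edgeDegree b (u k) = Multiset.card b :=
    sum_edgeDegree_eq_card _ fun e he => by
      obtain ⟨q, rfl⟩ := hb_mem e he
      exact ⟨q.1, by simp, fun k' => by simp⟩
  have hbw : ∑ m, edgeDegree b (w m) = Multiset.card b :=
    sum_edgeDegree_eq_card _ fun e he => by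
      obtain ⟨q, rfl⟩ := hb_mem e he
      exact ⟨q.2, by simp, fun m' => by simp⟩
  have hU : ∑ k, edgeDegree (a + b + p) (u k) = t := by simp [hdeg]
  have hW : ∑ m, edgeDegree (a + b + p) (w m) = t - 1 := by simp [hdeg]
  simp only [edgeDegree_add, Finset.sum_add_distrib, ha0, hpw, Finset.sum_const_zero,
    hpu, hbu, hbw] at hU hW
  omega

lemma isPMOf_contractEdges [Fintype V] {E : Multiset (Sym2 V)} (ht : 0 < t) {f : Fin t → V}
    (hf : ∀ k, f k ≠ v) (hdeg : E.filter (v ∈ ·) = Finset.univ.val.map fun k => s(v, f k))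
    {M : Multiset (Sym2 (MeredithV V v t))} (hM : IsPMOf (meredithEdges E v t ht f) M) :
    IsPMOf E (contractEdges M) := by
  rw [isPMOf_iff] at hM ⊢
  obtain ⟨hle, hdegM⟩ := hM
  refine ⟨contractEdges_meredithEdges ht hf hdeg ▸ contractEdges_mono hle, fun x => ?_⟩
  by_cases hx : x = v
  · rw [hx]
    rw [meredithEdges_eq] at hle
    obtain ⟨ab, p, hab, hp, rfl⟩ := Multiset.exists_eq_add_of_le_add hle
    obtain ⟨a, b, ha, hb, rfl⟩ := Multiset.exists_eq_add_of_le_add hab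
    have ha0 : edgeDegree (contractEdges a) v = 0 := edgeDegree_eq_zero.mpr fun e he => by
      have := Multiset.mem_of_le (contractEdges_mono ha) he
      rw [contractEdges_map_embed ht fun e he => (Multiset.mem_filter.mp he).2] at this
      exact (Multiset.mem_filter.mp this).2
    rw [contractEdges_add, contractEdges_add, contractEdges_eq_zero_of_le_bipEdges hb,
      edgeDegree_add, edgeDegree_add, ha0, edgeDegree_zero, zero_add, zero_add,
      edgeDegree_contractEdges_of_le_pendantEdges ht hf hp]
    exact card_eq_one_of_le_pendantEdges ht hf ha hb hp fun g => hdegM _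
  · rw [edgeDegree_contractEdges_of_ne hx]
    exact hdegM _

theorem exists_disjoint_pms_of_meredithEdges [Fintype V] {E : Multiset (Sym2 V)}
    (ht : 0 < t) {f : Fin t → V} (hf : ∀ k, f k ≠ v)
    (hdeg : E.filter (v ∈ ·) = Finset.univ.val.map fun k => s(v, f k))
    {M : Fin t → Multiset (Sym2 (MeredithV V v t))}
    (hM : ∀ i, IsPMOf (meredithEdges E v t ht f) (M i))
    (hsum : ∑ i, M i ≤ meredithEdges E v t ht f) :
    ∃ N : Fin t → Multiset (Sym2 V), (∀ i, IsPMOf E (N i)) ∧ ∑ i, N i ≤ E := by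
  refine ⟨fun i => contractEdges (M i), fun i => isPMOf_contractEdges ht hf hdeg (hM i), ?_⟩
  rw [← contractEdges_sum, ← contractEdges_meredithEdges ht hf hdeg]
  exact contractEdges_mono hsum

lemma edgeDegree_gadgetMatching_u [NeZero t] (j k : Fin t) :
    edgeDegree (gadgetMatching v j) (u k) = if k = j then 0 else 1 := by
  simp only [gadgetMatching, edgeDegree_sum, edgeDegree_singleton, bipEdge, Sym2.mem_iff,
    Sum.inr.injEq, Sum.inl.injEq, reduceCtorEq, or_false, @eq_comm _ k]
  split_ifs with h
  · subst h
    exact Finset.sum_eq_zero fun m _ => if_neg (add_wShift_ne_self j m)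
  · exact Finset.sum_boole_eq_one_of_existsUnique (existsUnique_add_wShift_eq (Ne.symm h))

lemma edgeDegree_gadgetMatching_w (j : Fin t) (m : Fin (t - 1)) :
    edgeDegree (gadgetMatching v j) (w m) = 1 := by
  simp only [gadgetMatching, edgeDegree_sum, edgeDegree_singleton, bipEdge, Sym2.mem_iff,
    Sum.inr.injEq, reduceCtorEq, false_or, @eq_comm _ m]
  exact Finset.sum_boole_eq_one_of_existsUnique existsUnique_eq

/-- The perfect matching of `G_v` induced by a perfect matching `N` of `G` whose edge at `v`
is `s(v, f j)`. -/
def liftMatching (v : V) (ht : 0 < t) (f : Fin t → V) (N : Multiset (Sym2 V)) (j : Fin t) :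
    Multiset (Sym2 (MeredithV V v t)) :=
  (N.filter (v ∉ ·)).map (Sym2.map (embed v ht)) + gadgetMatching v j + {pendantEdge v ht f j}

lemma contractEdges_liftMatching [NeZero t] (ht : 0 < t) {f : Fin t → V} (hf : ∀ k, f k ≠ v)
    {N : Multiset (Sym2 V)} {j : Fin t} (hv : N.filter (v ∈ ·) = {s(v, f j)}) :
    contractEdges (liftMatching v ht f N j) = N := by
  have hpend := contractEdges_map_pendantEdge ht hf {j}
  rw [Multiset.map_singleton, Multiset.map_singleton] at hpend
  rw [liftMatching, contractEdges_add, contractEdges_add,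
    contractEdges_map_embed ht fun e he => (Multiset.mem_filter.mp he).2,
    contractEdges_eq_zero_of_le_bipEdges (gadgetMatching_le j), hpend, ← hv, add_zero, add_comm]
  exact Multiset.filter_add_not _ N

lemma edgeDegree_liftMatching [NeZero t] (ht : 0 < t) {f : Fin t → V} (hf : ∀ k, f k ≠ v)
    {N : Multiset (Sym2 V)} (hN : ∀ x, edgeDegree N x = 1) {j : Fin t}
    (hv : N.filter (v ∈ ·) = {s(v, f j)}) (y : MeredithV V v t) :
    edgeDegree (liftMatching v ht f N j) y = 1 := by
  rcases y with ⟨x, hx⟩ | g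
  · rw [← edgeDegree_contractEdges_of_ne hx, contractEdges_liftMatching ht hf hv]
    exact hN x
  · have hemb : edgeDegree ((N.filter (v ∉ ·)).map (Sym2.map (embed v ht))) (.inr g) = 0 :=
      edgeDegree_eq_zero.mpr fun e he => by
        obtain ⟨e', he', rfl⟩ := Multiset.mem_map.mp he
        exact inr_notMem_map_embed ht (Multiset.mem_filter.mp he').2 g
    rw [liftMatching, edgeDegree_add, edgeDegree_add, hemb, zero_add, edgeDegree_singleton,
      pendantEdge, embed_of_ne ht (hf j)]
    rcases g with k | m
    · rw [edgeDegree_gadgetMatching_u]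
      by_cases hk : k = j <;> simp [hk]
    · simp [edgeDegree_gadgetMatching_w]

lemma exists_equiv_filter_mem_eq {E : Multiset (Sym2 V)} {f : Fin t → V}
    (hdeg : E.filter (v ∈ ·) = Finset.univ.val.map fun k => s(v, f k))
    {N : Fin t → Multiset (Sym2 V)} (hN : ∀ i, IsPMOf E (N i)) (hsum : ∑ i, N i ≤ E) :
    ∃ τ : Fin t ≃ Fin t, ∀ i, (N i).filter (v ∈ ·) = {s(v, f (τ i))} := by
  choose e he using fun i => Multiset.card_eq_one.mp ((hN i).2 v)
  have hle : Finset.univ.val.map e ≤ Finset.univ.val.map fun k => s(v, f k) := by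
    rw [← Finset.sum_singleton_eq_map_univ_val, ← hdeg]
    simp only [← he, ← Multiset.filter_sum]
    exact Multiset.filter_le_filter _ hsum
  obtain ⟨τ, hτ⟩ := exists_equiv_of_map_univ_eq (Multiset.eq_of_le_of_card_le hle (by simp))
  exact ⟨τ, fun i => (he i).trans (by rw [hτ])⟩

theorem exists_disjoint_pms_meredithEdges [Fintype V] {E : Multiset (Sym2 V)} (ht : 0 < t)
    {f : Fin t → V} (hf : ∀ k, f k ≠ v)
    (hdeg : E.filter (v ∈ ·) = Finset.univ.val.map fun k => s(v, f k))
    {N : Fin t → Multiset (Sym2 V)} (hN : ∀ i, IsPMOf E (N i)) (hsum : ∑ i, N i ≤ E) :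
    ∃ M : Fin t → Multiset (Sym2 (MeredithV V v t)),
      (∀ i, IsPMOf (meredithEdges E v t ht f) (M i)) ∧ ∑ i, M i ≤ meredithEdges E v t ht f := by
  have : NeZero t := ⟨ht.ne'⟩
  obtain ⟨τ, hτ⟩ := exists_equiv_filter_mem_eq hdeg hN hsum
  have hMsum : ∑ i, liftMatching v ht f (N i) (τ i) ≤ meredithEdges E v t ht f := by
    simp only [liftMatching, Finset.sum_add_distrib]
    rw [← Multiset.coe_mapAddMonoidHom, ← map_sum, ← Multiset.filter_sum,
      Equiv.sum_comp τ (gadgetMatching v), sum_gadgetMatching,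
      Equiv.sum_comp τ fun k => {pendantEdge v ht f k}, Finset.sum_singleton_eq_map_univ_val,
      meredithEdges_eq]
    gcongr
    exact Multiset.map_le_map (Multiset.filter_le_filter _ hsum)
  refine ⟨fun i => liftMatching v ht f (N i) (τ i), fun i => isPMOf_iff.mpr ⟨?_, ?_⟩, hMsum⟩
  · exact (Finset.single_le_sum (fun _ _ => Multiset.zero_le _) (Finset.mem_univ i)).trans hMsum
  · exact edgeDegree_liftMatching ht hf (isPMOf_iff.mp (hN i)).2 (hτ i)

end Meredith

/-- Meredith extension preserves the existence of `t` pairwise disjoint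
perfect matchings: the multigraph `G` has `t` pairwise (edge-)disjoint perfect
matchings iff its Meredith extension `G_v` at a vertex `v` of degree `t ≥ 2`
does. -/
theorem meredith_preserves_disjoint_pms {V : Type} [Fintype V] [DecidableEq V]
    (E : Multiset (Sym2 V))
    (v : V) (t : ℕ) (ht : 2 ≤ t) (f : Fin t → V) (hf : ∀ i, f i ≠ v)
    (hdeg : E.filter (fun e => v ∈ e) =
      (Finset.univ : Finset (Fin t)).val.map (fun i => s(v, f i))) :
    (∃ N : Fin t → Multiset (Sym2 V),
        (∀ i, IsPMOf E (N i)) ∧ (∑ i, N i) ≤ E) ↔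
    (∃ N : Fin t → Multiset (Sym2 (MeredithV V v t)),
        (∀ i, IsPMOf (meredithEdges E v t (by omega) f) (N i)) ∧
        (∑ i, N i) ≤ meredithEdges E v t (by omega) f) :=
  ⟨fun ⟨_, hN, hsum⟩ => Meredith.exists_disjoint_pms_meredithEdges _ hf hdeg hN hsum,
    fun ⟨_, hM, hsum⟩ => Meredith.exists_disjoint_pms_of_meredithEdges _ hf hdeg hM hsum⟩
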